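/- arXiv:1511.05931 — 2 statements merged into one kernel-verified Lean document; each statement's English description precedes it below -/
import Mathlib

section
/- If f is a Boolean function that is an FTF-function, then there exist substitutions A_1,...,A_n, each drawn from {p1, p2, p1 ∧ p2, ⊥, ⊤}, such that the function (p1,p2) ↦ f(A_1,...,A_n) equals the function (p1,p2) ↦ (p1 ∧ ¬p2). -/
/-- Strict pointwise order on Boolean tuples. -/
def TupLT {n : ℕ} (a b : Fin n → Bool) : Prop :=
  (∀ i, a i ≤ b i) ∧ a ≠ b

/-!
Given a chain `a ≤ b ≤ c` of tuples, substitute `⊤` on `a`, `p` on `b \ a`, `p ∧ q` on `c \ b`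
and `⊥` elsewhere. The substituted tuple is then `a` when `¬p`, `b` when `p ∧ ¬q` and `c` when
`p ∧ q`, and `f a = f c = false`, `f b = true` make `f` of it equal to `p ∧ ¬q`.
-/

variable {ι : Type*}

def chainSubst (a b c : ι → Bool) (i : ι) : Bool → Bool → Bool :=
  if a i then fun _ _ => true
  else if b i then fun p _ => p
  else if c i then fun p q => p && q
  else fun _ _ => false

theorem chainSubst_mem (a b c : ι → Bool) (i : ι) :
    chainSubst a b c i ∈ ({(fun p _ => p), (fun _ q => q), (fun p q => p && q),
      (fun _ _ => false), (fun _ _ => true)} : Set (Bool → Bool → Bool)) := by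
  unfold chainSubst
  split_ifs <;> simp

theorem chainSubst_apply {a b c : ι → Bool} (hab : a ≤ b) (hbc : b ≤ c) (i : ι) (p q : Bool) :
    chainSubst a b c i p q = if p then (if q then c i else b i) else a i := by
  have hab_i := hab i
  have hbc_i := hbc i
  revert hab_i hbc_i
  unfold chainSubst
  cases a i <;> cases b i <;> cases c i <;> cases p <;> cases q <;> simp

/-- If f is an FTF-function, then substituting suitable binary
functions from {p1, p2, p1 ∧ p2, ⊥, ⊤} for its arguments yields p1 ∧ ¬p2. -/
theorem FTF_yields_and_not {n : ℕ} (f : (Fin n → Bool) → Bool)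
    (hFTF : ∃ a b c : Fin n → Bool, TupLT a b ∧ TupLT b c ∧
        f a = false ∧ f b = true ∧ f c = false) :
    ∃ A : Fin n → (Bool → Bool → Bool),
      (∀ i, A i ∈ ({(fun p _ => p), (fun _ q => q), (fun p q => p && q),
                    (fun _ _ => false), (fun _ _ => true)} :
                    Set (Bool → Bool → Bool))) ∧
      ∀ p q : Bool, f (fun i => A i p q) = (p && !q) := by
  obtain ⟨a, b, c, ⟨hab, -⟩, ⟨hbc, -⟩, hfa, hfb, hfc⟩ := hFTF
  refine ⟨chainSubst a b c, chainSubst_mem a b c, fun p q => ?_⟩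
  simp only [chainSubst_apply hab hbc]
  cases p <;> cases q <;> simpa
end

section
/- Every non-constant Boolean function f that is not a TFT-function can be written as a conjunction of clauses, where each clause is either a disjunction of (unnegated) variables or a disjunction of negated variables, with at least one clause. -/
theorem tupLT_iff_lt {n : ℕ} {a b : Fin n → Bool} : TupLT a b ↔ a < b := by
  rw [lt_iff_le_and_ne]
  rfl

section Order

variable {α : Type*}

theorem Set.ordConnected_of_not_exists_lt_lt [PartialOrder α] {s : Set α}
    (h : ¬ ∃ a b c, a < b ∧ b < c ∧ a ∈ s ∧ b ∉ s ∧ c ∈ s) : s.OrdConnected := by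
  refine ⟨fun a ha c hc b ⟨hab, hbc⟩ => ?_⟩
  by_contra hb
  exact h ⟨a, b, c, hab.lt_of_ne (by rintro rfl; exact hb ha),
    hbc.lt_of_ne (by rintro rfl; exact hb hc), ha, hb, hc⟩

theorem IsUpperSet.mem_iff_forall_not_le [Preorder α] {U : Set α} (hU : IsUpperSet U) {x : α} :
    x ∈ U ↔ ∀ y ∉ U, ¬ x ≤ y :=
  ⟨fun hx _ hy hxy => hy (hU hxy hx), fun h => not_not.mp fun hx => h x hx le_rfl⟩

theorem IsLowerSet.mem_iff_forall_not_le [Preorder α] {L : Set α} (hL : IsLowerSet L) {x : α} :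
    x ∈ L ↔ ∀ y ∉ L, ¬ y ≤ x :=
  hL.toDual.mem_iff_forall_not_le

end Order

theorem Pi.not_le_iff_exists_bool {ι : Type*} {x y : ι → Bool} :
    ¬ x ≤ y ↔ ∃ i, x i = true ∧ y i = false := by
  simp [Pi.le_def, Bool.lt_iff, and_comm]

theorem Finset.forall_equivFin_symm_iff {α : Type*} {s : Finset α} {p : α → Prop} :
    (∀ g, p (s.equivFin.symm g)) ↔ ∀ y ∈ s, p y :=
  (s.equivFin.forall_congr_left (p := fun y : s => p y)).symm.trans Subtype.forall

section Clauses

variable {n : ℕ}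

def falseVars (y : Fin n → Bool) : List (Fin n) := (List.finRange n).filter fun i => !y i

def trueVars (y : Fin n → Bool) : List (Fin n) := (List.finRange n).filter fun i => y i

@[simp]
theorem mem_falseVars {y : Fin n → Bool} {i : Fin n} : i ∈ falseVars y ↔ y i = false := by
  simp [falseVars]

@[simp]
theorem mem_trueVars {y : Fin n → Bool} {i : Fin n} : i ∈ trueVars y ↔ y i = true := by
  simp [trueVars]

variable {U L : Set (Fin n → Bool)} {x y : Fin n → Bool}

theorem IsUpperSet.mem_iff_forall_exists_mem_falseVars (hU : IsUpperSet U) :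
    x ∈ U ↔ ∀ y ∉ U, ∃ i ∈ falseVars y, x i = true := by
  rw [hU.mem_iff_forall_not_le]
  simp only [Pi.not_le_iff_exists_bool, mem_falseVars, and_comm]

theorem IsLowerSet.mem_iff_forall_exists_mem_trueVars (hL : IsLowerSet L) :
    x ∈ L ↔ ∀ y ∉ L, ∃ i ∈ trueVars y, x i = false := by
  rw [hL.mem_iff_forall_not_le]
  simp only [Pi.not_le_iff_exists_bool, mem_trueVars]

theorem IsUpperSet.falseVars_ne_nil (hU : IsUpperSet U) (hne : U.Nonempty) (hy : y ∉ U) :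
    falseVars y ≠ [] := by
  have hy_ne_top : y ≠ ⊤ := fun h => hy (h ▸ hU.top_mem.mpr hne)
  obtain ⟨i, hi⟩ : ∃ i, y i = false := by
    by_contra! h
    exact hy_ne_top (funext fun i => by simpa using h i)
  exact List.ne_nil_of_mem (mem_falseVars.mpr hi)

theorem IsLowerSet.trueVars_ne_nil (hL : IsLowerSet L) (hne : L.Nonempty) (hy : y ∉ L) :
    trueVars y ≠ [] := by
  have hy_ne_bot : y ≠ ⊥ := fun h => hy (h ▸ hL.bot_mem.mpr hne)
  obtain ⟨i, hi⟩ : ∃ i, y i = true := by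
    by_contra! h
    exact hy_ne_bot (funext fun i => by simpa using h i)
  exact List.ne_nil_of_mem (mem_trueVars.mpr hi)

theorem Set.OrdConnected.mem_iff_forall_exists_mem_vars {S : Set (Fin n → Bool)}
    (hS : S.OrdConnected) :
    x ∈ S ↔ (∀ y ∉ upperClosure S, ∃ i ∈ falseVars y, x i = true) ∧
      (∀ y ∉ lowerClosure S, ∃ i ∈ trueVars y, x i = false) := by
  calc x ∈ S ↔ x ∈ (upperClosure S : Set _) ∩ lowerClosure S := by
        rw [hS.upperClosure_inter_lowerClosure]
    _ ↔ _ := and_congr (upperClosure S).upper.mem_iff_forall_exists_mem_falseVars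
        (lowerClosure S).lower.mem_iff_forall_exists_mem_trueVars

end Clauses

/-- Every non-constant Boolean function that is not a TFT-function
is a conjunction of clauses, each a nonempty disjunction of variables or a
nonempty disjunction of negated variables, with at least one clause. -/
theorem nonTFT_CNF {n : ℕ} (f : (Fin n → Bool) → Bool)
    (hnc : ∃ a b : Fin n → Bool, f a ≠ f b)
    (hnTFT : ¬ ∃ a b c : Fin n → Bool, TupLT a b ∧ TupLT b c ∧
        f a = true ∧ f b = false ∧ f c = true) :
    ∃ (k m : ℕ) (P : Fin k → List (Fin n)) (Q : Fin m → List (Fin n)),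
      k + m > 0 ∧
      (∀ g, P g ≠ []) ∧ (∀ h, Q h ≠ []) ∧
      ∀ a : Fin n → Bool,
        f a = true ↔
          ((∀ g, ∃ i ∈ P g, a i = true) ∧ (∀ h, ∃ i ∈ Q h, a i = false)) := by
  classical
  set S : Set (Fin n → Bool) := {a | f a = true}
  have hS : S.OrdConnected :=
    Set.ordConnected_of_not_exists_lt_lt (by simpa [S, ← tupLT_iff_lt] using hnTFT)
  obtain ⟨a, b, hab⟩ := hnc
  have hne : S.Nonempty := by
    cases ha : f a
    · exact ⟨b, by simpa [S, ha] using hab.symm⟩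
    · exact ⟨a, ha⟩
  let FU := Finset.univ.filter (· ∉ (upperClosure S : Set (Fin n → Bool)))
  let FD := Finset.univ.filter (· ∉ (lowerClosure S : Set (Fin n → Bool)))
  have hrep : ∀ x, f x = true ↔
      (∀ g, ∃ i ∈ falseVars (FU.equivFin.symm g : Fin n → Bool), x i = true) ∧
      (∀ h, ∃ i ∈ trueVars (FD.equivFin.symm h : Fin n → Bool), x i = false) := fun x => by
    rw [Finset.forall_equivFin_symm_iff (p := fun y => ∃ i ∈ falseVars y, x i = true),
      Finset.forall_equivFin_symm_iff (p := fun y => ∃ i ∈ trueVars y, x i = false)]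
    simp only [FU, FD, Finset.mem_filter, Finset.mem_univ, true_and]
    exact hS.mem_iff_forall_exists_mem_vars
  refine ⟨FU.card, FD.card, _, _, ?_,
    fun g => (upperClosure S).upper.falseVars_ne_nil (hne.mono subset_upperClosure)
      (Finset.mem_filter.mp (FU.equivFin.symm g).2).2,
    fun h => (lowerClosure S).lower.trueVars_ne_nil (hne.mono subset_lowerClosure)
      (Finset.mem_filter.mp (FD.equivFin.symm h).2).2, hrep⟩
  by_contra! h0
  have hall : ∀ x, f x = true := fun x =>
    (hrep x).2 ⟨fun g => absurd g.2 (by omega), fun h => absurd h.2 (by omega)⟩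
  exact hab (by rw [hall a, hall b])
end
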